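/- arXiv:1407.7048 — 2 statements merged into one kernel-verified Lean document; each statement's English description precedes it below -/
import Mathlib

section
/- For all real numbers a, b, c one has [ (1/4)(a² + b²)(a + b) − (3b − c)/2 ] · (a − b) = f₀(a) − f₀(b) + (1/4)[ (a − b)² − (b − c)² + (a − 2b + c)² ], where f₀(x) = (1/4)(1 − x²)². (This is the pointwise convex-splitting identity showing that the Crank–Nicolson convex-splitting approximation of f₀′, namely (1/2)((φ^{k+1})² + (φ^k)²)·(φ^{k+1}+φ^k)/2 − φ̃^{k+1/2}, exactly reproduces the free-energy increment plus controlled remainder terms.) -/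
/-- The quartic homogeneous free energy density. -/
noncomputable def f₀ (x : ℝ) : ℝ := (1 / 4) * (1 - x ^ 2) ^ 2

/-- Pointwise convex-splitting identity for the Crank–Nicolson approximation of `f₀′`. -/
theorem stmt_2 (a b c : ℝ) :
    ((1 / 4) * (a ^ 2 + b ^ 2) * (a + b) - (3 * b - c) / 2) * (a - b) =
      f₀ a - f₀ b +
        (1 / 4) * ((a - b) ^ 2 - (b - c) ^ 2 + (a - 2 * b + c) ^ 2) := by
  simp only [f₀]; ring
end

section
/- Let (X, μ) be a measure space and let φ₁, φ₀, φ₋₁ : X → ℝ be measurable functions lying in L²(μ) ∩ L⁴(μ). Then ∫_X [ (1/4)(φ₁² + φ₀²)(φ₁ + φ₀) − (3φ₀ − φ₋₁)/2 ] (φ₁ − φ₀) dμ = ∫_X ( f₀(φ₁) − f₀(φ₀) ) dμ + (1/4)( ‖φ₁ − φ₀‖²_{L²(μ)} − ‖φ₀ − φ₋₁‖²_{L²(μ)} + ‖φ₁ − 2φ₀ + φ₋₁‖²_{L²(μ)} ), where f₀(x) = (1/4)(1 − x²)². (This is the identity obtained by testing the discrete chemical potential equation with the increment φ^{k+1} −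 φ^k, which yields the unconditional energy stability of the convex-splitting scheme.) -/
open MeasureTheory

/-- Integral convex-splitting identity obtained by testing the discrete chemical potential
equation with the increment `φ₁ − φ₀`. Here `φprev` plays the role of `φ₋₁`. -/
theorem stmt_3 {X : Type*} [MeasurableSpace X] (μ : Measure X)
    (φ₁ φ₀ φprev : X → ℝ)
    (hm₁ : Measurable φ₁) (hm₀ : Measurable φ₀) (hmprev : Measurable φprev)
    (h₁2 : MemLp φ₁ 2 μ) (h₀2 : MemLp φ₀ 2 μ) (hprev2 : MemLp φprev 2 μ)
    (h₁4 : MemLp φ₁ 4 μ) (h₀4 : MemLp φ₀ 4 μ) (hprev4 : MemLp φprev 4 μ) :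
    ∫ x, ((1 / 4) * (φ₁ x ^ 2 + φ₀ x ^ 2) * (φ₁ x + φ₀ x)
        - (3 * φ₀ x - φprev x) / 2) * (φ₁ x - φ₀ x) ∂μ =
      (∫ x, (f₀ (φ₁ x) - f₀ (φ₀ x)) ∂μ) +
        (1 / 4) * ((∫ x, (φ₁ x - φ₀ x) ^ 2 ∂μ)
          - (∫ x, (φ₀ x - φprev x) ^ 2 ∂μ)
          + (∫ x, (φ₁ x - 2 * φ₀ x + φprev x) ^ 2 ∂μ)) := by
  -- integrability of fourth powers
  have h4i : ∀ {f : X → ℝ}, MemLp f 4 μ → Integrable (fun x => f x ^ 4) μ := by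
    intro f h4
    have h := h4.integrable_norm_rpow (by norm_num) (by norm_num)
    refine h.congr (Filter.Eventually.of_forall fun x => ?_)
    have h4 : ((4 : ENNReal).toReal) = ((4 : ℕ) : ℝ) := by norm_num
    simp only [Real.norm_eq_abs, h4, Real.rpow_natCast]
    exact Even.pow_abs ⟨2, rfl⟩ _
  -- integrability of squares
  have hsq : ∀ {f : X → ℝ}, MemLp f 2 μ → Integrable (fun x => f x ^ 2) μ :=
    fun h => h.integrable_sq
  have hu : Integrable (fun x => (φ₁ x - φ₀ x) ^ 2) μ := hsq (h₁2.sub h₀2)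
  have hv : Integrable (fun x => (φ₀ x - φprev x) ^ 2) μ := hsq (h₀2.sub hprev2)
  have hw : Integrable (fun x => (φ₁ x - 2 * φ₀ x + φprev x) ^ 2) μ :=
    hsq ((h₁2.sub (h₀2.const_mul 2)).add hprev2)
  -- integrability of the free-energy difference
  have hA : Integrable (fun x => f₀ (φ₁ x) - f₀ (φ₀ x)) μ := by
    have e : (fun x => f₀ (φ₁ x) - f₀ (φ₀ x)) =
        fun x => ((1 / 4 : ℝ) * φ₁ x ^ 4 - (1 / 4 : ℝ) * φ₀ x ^ 4)
          - ((1 / 2 : ℝ) * φ₁ x ^ 2 - (1 / 2 : ℝ) * φ₀ x ^ 2) := by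
      funext x; simp only [f₀]; ring
    rw [e]
    exact (((h4i h₁4).const_mul _).sub ((h4i h₀4).const_mul _)).sub
      (((hsq h₁2).const_mul _).sub ((hsq h₀2).const_mul _))
  have hB : Integrable (fun x => (1 / 4 : ℝ) *
      ((φ₁ x - φ₀ x) ^ 2 - (φ₀ x - φprev x) ^ 2 + (φ₁ x - 2 * φ₀ x + φprev x) ^ 2)) μ :=
    ((hu.sub hv).add hw).const_mul _
  -- pointwise identity
  have key : (fun x => ((1 / 4) * (φ₁ x ^ 2 + φ₀ x ^ 2) * (φ₁ x + φ₀ x)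
        - (3 * φ₀ x - φprev x) / 2) * (φ₁ x - φ₀ x)) =
      fun x => (f₀ (φ₁ x) - f₀ (φ₀ x)) + (1 / 4 : ℝ) *
        ((φ₁ x - φ₀ x) ^ 2 - (φ₀ x - φprev x) ^ 2 + (φ₁ x - 2 * φ₀ x + φprev x) ^ 2) := by
    funext x; simp only [f₀]; ring
  have e1 : ∫ x, ((φ₁ x - φ₀ x) ^ 2 - (φ₀ x - φprev x) ^ 2
        + (φ₁ x - 2 * φ₀ x + φprev x) ^ 2) ∂μ =
      (∫ x, ((φ₁ x - φ₀ x) ^ 2 - (φ₀ x - φprev x) ^ 2) ∂μ)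
        + ∫ x, (φ₁ x - 2 * φ₀ x + φprev x) ^ 2 ∂μ := integral_add (hu.sub hv) hw
  have e2 : ∫ x, ((φ₁ x - φ₀ x) ^ 2 - (φ₀ x - φprev x) ^ 2) ∂μ =
      (∫ x, (φ₁ x - φ₀ x) ^ 2 ∂μ) - ∫ x, (φ₀ x - φprev x) ^ 2 ∂μ := integral_sub hu hv
  rw [key, integral_add hA hB, integral_const_mul, e1, e2]
end
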